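/- Let B be a real n×n matrix with det B ≥ 0 whose kernel has dimension at most 1 (equivalently, 0 has multiplicity at most 1 as an eigenvalue of the positive semidefinite square root R of Bᵀ B). Then there is exactly one Q ∈ SO(n) maximizing trace(Qᵀ B) over SO(n); equivalently, there is a unique Q ∈ SO(n) with Q R = B. -/

import Mathlib

/-!
Since `R² = BᵀB` and `R` is symmetric, `R` and `B` have the same kernel, spanned by a unit
vector `u` when `R` is singular. An orthogonal `Q` with `Q R = B` is `B R⁻¹` if `R` is invertible,
and `(B + v uᵀ)(R + u uᵀ)⁻¹` for a unit vector `v ∈ ker Bᵀ` otherwise: both factors square to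
`R² + u uᵀ`, and `R + u uᵀ` is invertible because the kernel of `R` is at most a line. If
`det Q = -1`, then `det R = 0` since `det B ≥ 0`, and `Q (1 - 2 u uᵀ)` is a factor in `SO(n)`.

If `U ∈ SO(n)` fixes `R`, it preserves `ker R`, so `U u = c u` and
`U (R + u uᵀ) = (R + u uᵀ)(1 + (c - 1) u uᵀ)`; taking determinants gives `c = 1`, hence `U = 1`.

Writing `R = T²` with `T` symmetric, `2 (tr R - tr (M R)) = tr (((1 - M) T)ᵀ (1 - M) T) ≥ 0` for
orthogonal `M`. With `M = Q'ᵀ Q` this shows that `Q` maximizes `Q' ↦ tr (Q'ᵀ B)`, and that every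
maximizer `Q'` satisfies `Q' R = B`, so equals `Q`.
-/

open Matrix

namespace Matrix

section CommRing

variable {m α : Type*} [Fintype m] [CommRing α]

lemma vecMulVec_mulVec_of_dotProduct_eq_one (u : m → α) {v w : m → α} (h : v ⬝ᵥ w = 1) :
    vecMulVec u v *ᵥ w = u := by
  rw [vecMulVec_mulVec, h, MulOpposite.op_one, one_smul]

lemma add_vecMulVec_transpose_mul_self {B : Matrix m m α} {u v : m → α} (hv : Bᵀ *ᵥ v = 0)
    (hv1 : v ⬝ᵥ v = 1) :
    (B + vecMulVec v u)ᵀ * (B + vecMulVec v u) = Bᵀ * B + vecMulVec u u := by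
  have hvB : v ᵥ* B = 0 := by rw [← mulVec_transpose, hv]
  rw [transpose_add, transpose_vecMulVec, add_mul, mul_add, mul_add, mul_vecMulVec, hv,
    vecMulVec_mul, hvB, vecMulVec_mul_vecMulVec, hv1]
  simp

variable [DecidableEq m]

lemma det_one_add_vecMulVec (u v : m → α) : (1 + vecMulVec u v).det = 1 + v ⬝ᵥ u := by
  rw [vecMulVec_eq Unit, det_one_add_replicateCol_mul_replicateRow]

lemma det_eq_one_or_neg_one_of_transpose_mul_self [NoZeroDivisors α] {Q : Matrix m m α}
    (hQ : Qᵀ * Q = 1) : Q.det = 1 ∨ Q.det = -1 := by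
  have h := congrArg det hQ
  rw [det_mul, det_transpose, det_one] at h
  exact mul_self_eq_one_iff.mp h

lemma transpose_mul_self_mul {P Q : Matrix m m α} (hP : Pᵀ * P = 1) (hQ : Qᵀ * Q = 1) :
    (P * Q)ᵀ * (P * Q) = 1 := by
  rw [transpose_mul, Matrix.mul_assoc, ← Matrix.mul_assoc Pᵀ, hP, one_mul, hQ]

lemma transpose_mul_transpose_mul_self {P Q : Matrix m m α} (hP : Pᵀ * P = 1)
    (hQ : Qᵀ * Q = 1) : (Pᵀ * Q)ᵀ * (Pᵀ * Q) = 1 :=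
  transpose_mul_self_mul (by rw [transpose_transpose, mul_eq_one_comm, hP]) hQ

lemma transpose_mul_self_mul_inv {C S : Matrix m m α} (hS : Sᵀ = S) (hSdet : IsUnit S.det)
    (h : Cᵀ * C = S * S) : (C * S⁻¹)ᵀ * (C * S⁻¹) = 1 := by
  rw [transpose_mul, transpose_nonsing_inv, hS, Matrix.mul_assoc, ← Matrix.mul_assoc Cᵀ, h,
    Matrix.mul_assoc, mul_nonsing_inv _ hSdet, mul_one, nonsing_inv_mul _ hSdet]

def householder (u : m → α) : Matrix m m α := 1 - (2 : α) • vecMulVec u u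

lemma householder_transpose_mul_self {u : m → α} (hu : u ⬝ᵥ u = 1) :
    (householder u)ᵀ * householder u = 1 := by
  simp only [householder, transpose_sub, transpose_one, transpose_smul, transpose_vecMulVec,
    sub_mul, mul_sub, one_mul, mul_one, smul_mul_smul_comm, vecMulVec_mul_vecMulVec, hu,
    one_smul]
  module

lemma det_householder {u : m → α} (hu : u ⬝ᵥ u = 1) : (householder u).det = -1 := by
  rw [householder, sub_eq_add_neg, ← neg_smul, ← smul_vecMulVec, det_one_add_vecMulVec,
    dotProduct_smul, hu]
  norm_num

lemma householder_mul_of_vecMul_eq_zero {u : m → α} {R : Matrix m m α} (h : u ᵥ* R = 0) :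
    householder u * R = R := by
  rw [householder, sub_mul, one_mul, smul_mul_assoc, vecMulVec_mul, h, vecMulVec_zero,
    smul_zero, sub_zero]

lemma two_mul_sub_trace_mul_eq {M T : Matrix m m α} (hM : Mᵀ * M = 1) (hT : Tᵀ = T) :
    2 * ((T * T).trace - (M * (T * T)).trace) = (((1 - M) * T)ᵀ * ((1 - M) * T)).trace := by
  have hsq : (1 - M)ᵀ * (1 - M) = (1 - M) + (1 - Mᵀ) := by
    rw [transpose_sub, transpose_one, sub_mul, mul_sub, mul_sub, hM]
    noncomm_ring
  have hsym : (T * Mᵀ * T).trace = (T * M * T).trace := by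
    rw [← trace_transpose (T * M * T)]
    simp only [transpose_mul, hT, Matrix.mul_assoc]
  rw [transpose_mul, hT, Matrix.mul_assoc, ← Matrix.mul_assoc _ (1 - M), hsq,
    ← Matrix.mul_assoc, ← Matrix.mul_assoc, trace_mul_cycle]
  simp only [add_mul, mul_add, sub_mul, mul_sub, mul_one, trace_add, trace_sub, hsym]
  ring

end CommRing

lemma exists_smul_eq_of_mulVec_eq_zero {m K : Type*} [Fintype m] [Field K] {A : Matrix m m K}
    (hker : Module.finrank K (LinearMap.ker A.mulVecLin) ≤ 1) {u x : m → K}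
    (hu : A *ᵥ u = 0) (hu0 : u ≠ 0) (hx : A *ᵥ x = 0) : ∃ c : K, c • u = x := by
  have hspan : K ∙ u = LinearMap.ker A.mulVecLin :=
    Submodule.eq_of_le_of_finrank_le (by simpa using hu) (by rwa [finrank_span_singleton hu0])
  exact Submodule.mem_span_singleton.mp (hspan ▸ (by simpa using hx))

section Real

open scoped MatrixOrder

variable {m : Type*}

lemma PosSemidef.transpose_eq {R : Matrix m m ℝ} (hR : R.PosSemidef) : Rᵀ = R :=
  isHermitian_iff_isSymm.mp hR.isHermitian

variable [Fintype m]

lemma ker_mulVecLin_eq_of_mul_self_eq {B R : Matrix m m ℝ} (hR : Rᵀ = R)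
    (hRR : R * R = Bᵀ * B) : LinearMap.ker R.mulVecLin = LinearMap.ker B.mulVecLin := by
  rw [← ker_mulVecLin_conjTranspose_mul_self R, ← ker_mulVecLin_conjTranspose_mul_self B]
  simp only [conjTranspose_eq_transpose_of_trivial, hR, hRR]

variable [DecidableEq m]

lemma exists_mulVec_eq_zero_and_dotProduct_self_eq_one {A : Matrix m m ℝ} (h : A.det = 0) :
    ∃ u, A *ᵥ u = 0 ∧ u ⬝ᵥ u = 1 := by
  obtain ⟨v, hv0, hv⟩ := exists_mulVec_eq_zero_iff.mpr h
  have hpos : 0 < v ⬝ᵥ v := by simpa using dotProduct_star_self_pos_iff.mpr hv0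
  refine ⟨(√(v ⬝ᵥ v))⁻¹ • v, by rw [mulVec_smul, hv, smul_zero], ?_⟩
  rw [smul_dotProduct, dotProduct_smul, smul_eq_mul, smul_eq_mul, ← mul_assoc, ← mul_inv,
    Real.mul_self_sqrt hpos.le, inv_mul_cancel₀ hpos.ne']

lemma exists_transpose_eq_and_mul_self_eq {R : Matrix m m ℝ} (hR : R.PosSemidef) :
    ∃ T : Matrix m m ℝ, Tᵀ = T ∧ T * T = R :=
  ⟨CFC.sqrt R, (CFC.sqrt_nonneg R).posSemidef.transpose_eq, CFC.sqrt_mul_sqrt_self R hR.nonneg⟩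

variable {B R : Matrix m m ℝ}

lemma isUnit_det_add_vecMulVec_self (hR : R.PosSemidef)
    (hker : Module.finrank ℝ (LinearMap.ker R.mulVecLin) ≤ 1) {u : m → ℝ}
    (hu : R *ᵥ u = 0) (hu0 : u ≠ 0) : IsUnit (R + vecMulVec u u).det := by
  rw [isUnit_iff_ne_zero]
  intro hdet
  obtain ⟨v, hv0, hv⟩ := exists_mulVec_eq_zero_iff.mpr hdet
  have hsum : v ⬝ᵥ (R *ᵥ v) + (u ⬝ᵥ v) * (u ⬝ᵥ v) = 0 := by
    have h := congrArg (v ⬝ᵥ ·) hv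
    simp only [add_mulVec, vecMulVec_mulVec, dotProduct_add, dotProduct_zero] at h
    simpa [dotProduct_comm v u] using h
  have hRv0 : 0 ≤ v ⬝ᵥ (R *ᵥ v) := by simpa using hR.dotProduct_mulVec_nonneg v
  obtain ⟨hRv, huv⟩ := (add_eq_zero_iff_of_nonneg hRv0 (mul_self_nonneg _)).mp hsum
  obtain ⟨c, rfl⟩ := exists_smul_eq_of_mulVec_eq_zero hker hu hu0
    ((hR.dotProduct_mulVec_zero_iff _).mp (by simpa using hRv))
  rw [mul_self_eq_zero, dotProduct_smul, smul_eq_mul, mul_eq_zero, dotProduct_self_eq_zero] at huv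
  exact hv0 (by rw [huv.resolve_right hu0, zero_smul])

lemma exists_orthogonal_mul_eq (hR : R.PosSemidef) (hRR : R * R = Bᵀ * B)
    (hker : Module.finrank ℝ (LinearMap.ker R.mulVecLin) ≤ 1) :
    ∃ Q : Matrix m m ℝ, Qᵀ * Q = 1 ∧ Q * R = B := by
  by_cases hRdet : IsUnit R.det
  · exact ⟨B * R⁻¹, transpose_mul_self_mul_inv hR.transpose_eq hRdet hRR.symm,
      nonsing_inv_mul_cancel_right _ _ hRdet⟩
  obtain ⟨u, hu, hu1⟩ := exists_mulVec_eq_zero_and_dotProduct_self_eq_one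
    (by simpa [isUnit_iff_ne_zero] using hRdet)
  have hu0 : u ≠ 0 := by rintro rfl; simp at hu1
  have hBu : B *ᵥ u = 0 := LinearMap.mem_ker.mp
    (ker_mulVecLin_eq_of_mul_self_eq hR.transpose_eq hRR ▸ LinearMap.mem_ker.mpr hu)
  obtain ⟨v, hv, hv1⟩ := exists_mulVec_eq_zero_and_dotProduct_self_eq_one
    (show Bᵀ.det = 0 by rw [det_transpose]; exact exists_mulVec_eq_zero_iff.mp ⟨u, hu0, hBu⟩)
  set S := R + vecMulVec u u
  have hS : IsUnit S.det := isUnit_det_add_vecMulVec_self hR hker hu hu0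
  have hSsym : Sᵀ = S := by simp only [S, transpose_add, hR.transpose_eq, transpose_vecMulVec]
  have hSS : (B + vecMulVec v u)ᵀ * (B + vecMulVec v u) = S * S :=
    calc _ = Rᵀ * R + vecMulVec u u := by
          rw [add_vecMulVec_transpose_mul_self hv hv1, hR.transpose_eq, hRR]
      _ = Sᵀ * S := (add_vecMulVec_transpose_mul_self (by rwa [hR.transpose_eq]) hu1).symm
      _ = S * S := by rw [hSsym]
  set Q := (B + vecMulVec v u) * S⁻¹
  have hQS : Q * S = B + vecMulVec v u := nonsing_inv_mul_cancel_right _ _ hS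
  have hSu : S *ᵥ u = u := by
    rw [add_mulVec, hu, vecMulVec_mulVec_of_dotProduct_eq_one u hu1, zero_add]
  have hQu : Q *ᵥ u = v := by
    rw [← hSu, mulVec_mulVec, hQS, add_mulVec, hBu, vecMulVec_mulVec_of_dotProduct_eq_one v hu1,
      zero_add]
  refine ⟨Q, transpose_mul_self_mul_inv hSsym hS hSS, ?_⟩
  calc Q * R = Q * S - Q * vecMulVec u u := by rw [← mul_sub, add_sub_cancel_right]
    _ = B := by rw [hQS, mul_vecMulVec, hQu, add_sub_cancel_right]

lemma exists_specialOrthogonal_mul_eq (hdet : 0 ≤ B.det) (hR : R.PosSemidef)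
    (hRR : R * R = Bᵀ * B) (hker : Module.finrank ℝ (LinearMap.ker R.mulVecLin) ≤ 1) :
    ∃ Q : Matrix m m ℝ, (Qᵀ * Q = 1 ∧ Q.det = 1) ∧ Q * R = B := by
  obtain ⟨Q, hQ, hQR⟩ := exists_orthogonal_mul_eq hR hRR hker
  rcases det_eq_one_or_neg_one_of_transpose_mul_self hQ with hQdet | hQdet
  · exact ⟨Q, ⟨hQ, hQdet⟩, hQR⟩
  have hRdet : R.det = 0 := by
    have hB : B.det = -R.det := by rw [← hQR, det_mul, hQdet, neg_one_mul]
    linarith [hR.det_nonneg]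
  obtain ⟨u, hu, hu1⟩ := exists_mulVec_eq_zero_and_dotProduct_self_eq_one hRdet
  have huR : u ᵥ* R = 0 := by rw [← mulVec_transpose, hR.transpose_eq, hu]
  refine ⟨Q * householder u,
    ⟨transpose_mul_self_mul hQ (householder_transpose_mul_self hu1), ?_⟩, ?_⟩
  · rw [det_mul, hQdet, det_householder hu1, neg_one_mul, neg_neg]
  · rw [Matrix.mul_assoc, householder_mul_of_vecMul_eq_zero huR, hQR]

lemma eq_one_of_mul_eq_self {U : Matrix m m ℝ} (hR : R.PosSemidef)
    (hker : Module.finrank ℝ (LinearMap.ker R.mulVecLin) ≤ 1) (hU : Uᵀ * U = 1)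
    (hUdet : U.det = 1) (hUR : U * R = R) : U = 1 := by
  by_cases hRdet : IsUnit R.det
  · simpa [Matrix.mul_assoc, mul_nonsing_inv _ hRdet] using congrArg (· * R⁻¹) hUR
  obtain ⟨u, hu, hu1⟩ := exists_mulVec_eq_zero_and_dotProduct_self_eq_one
    (by simpa [isUnit_iff_ne_zero] using hRdet)
  have hu0 : u ≠ 0 := by rintro rfl; simp at hu1
  have hRU : R * U = R := by
    have hUtR : Uᵀ * R = R :=
      calc Uᵀ * R = Uᵀ * (U * R) := by rw [hUR]
        _ = R := by rw [← Matrix.mul_assoc, hU, one_mul]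
    simpa [transpose_mul, hR.transpose_eq] using congrArg transpose hUtR
  obtain ⟨c, hc⟩ := exists_smul_eq_of_mulVec_eq_zero hker hu hu0
    (show R *ᵥ (U *ᵥ u) = 0 by rw [mulVec_mulVec, hRU, hu])
  set S := R + vecMulVec u u with hSdef
  have hS : IsUnit S.det := isUnit_det_add_vecMulVec_self hR hker hu hu0
  have hSu : S *ᵥ u = u := by
    rw [add_mulVec, hu, vecMulVec_mulVec_of_dotProduct_eq_one u hu1, zero_add]
  have hUS : U * S = S * (1 + vecMulVec ((c - 1) • u) u) := by
    rw [mul_add, hUR, mul_vecMulVec, ← hc, mul_add, mul_one, mul_vecMulVec, mulVec_smul, hSu,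
      smul_vecMulVec, smul_vecMulVec, sub_smul, one_smul, hSdef]
    abel
  have hc1 : c = 1 := by
    have h := congrArg det hUS
    rw [det_mul, det_mul, hUdet, one_mul, det_one_add_vecMulVec, dotProduct_smul, hu1,
      smul_eq_mul, mul_one, add_sub_cancel] at h
    exact (mul_eq_left₀ hS.ne_zero).mp h.symm
  rw [hc1, sub_self, zero_smul, zero_vecMulVec, add_zero, mul_one] at hUS
  simpa [Matrix.mul_assoc, mul_nonsing_inv _ hS] using congrArg (· * S⁻¹) hUS

lemma eq_of_mul_eq_mul {Q₁ Q₂ : Matrix m m ℝ} (hR : R.PosSemidef)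
    (hker : Module.finrank ℝ (LinearMap.ker R.mulVecLin) ≤ 1) (hQ₁ : Q₁ᵀ * Q₁ = 1)
    (hQ₁det : Q₁.det = 1) (hQ₂ : Q₂ᵀ * Q₂ = 1) (hQ₂det : Q₂.det = 1) (h : Q₁ * R = Q₂ * R) :
    Q₁ = Q₂ := by
  have hU : Q₂ᵀ * Q₁ = 1 := by
    refine eq_one_of_mul_eq_self hR hker (transpose_mul_transpose_mul_self hQ₂ hQ₁)
      (by rw [det_mul, det_transpose, hQ₁det, hQ₂det, one_mul]) ?_
    rw [Matrix.mul_assoc, h, ← Matrix.mul_assoc, hQ₂, one_mul]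
  calc Q₁ = Q₂ * (Q₂ᵀ * Q₁) := by rw [← Matrix.mul_assoc, mul_eq_one_comm.mp hQ₂, one_mul]
    _ = Q₂ := by rw [hU, mul_one]

lemma trace_mul_le_trace {M : Matrix m m ℝ} (hM : Mᵀ * M = 1) (hR : R.PosSemidef) :
    (M * R).trace ≤ R.trace := by
  obtain ⟨T, hT, rfl⟩ := exists_transpose_eq_and_mul_self_eq hR
  have h := two_mul_sub_trace_mul_eq hM hT
  have hnonneg := (posSemidef_conjTranspose_mul_self ((1 - M) * T)).trace_nonneg
  rw [conjTranspose_eq_transpose_of_trivial] at hnonneg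
  linarith

lemma mul_eq_self_of_trace_mul_eq {M : Matrix m m ℝ} (hM : Mᵀ * M = 1) (hR : R.PosSemidef)
    (h : (M * R).trace = R.trace) : M * R = R := by
  obtain ⟨T, hT, rfl⟩ := exists_transpose_eq_and_mul_self_eq hR
  have h0 := two_mul_sub_trace_mul_eq hM hT
  rw [h, sub_self, mul_zero, eq_comm, ← conjTranspose_eq_transpose_of_trivial,
    trace_conjTranspose_mul_self_eq_zero_iff, sub_mul, one_mul, sub_eq_zero] at h0
  rw [← Matrix.mul_assoc, ← h0]

lemma trace_transpose_mul_le {Q Q' : Matrix m m ℝ} (hR : R.PosSemidef) (hQ : Qᵀ * Q = 1)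
    (hQR : Q * R = B) (hQ' : Q'ᵀ * Q' = 1) : (Q'ᵀ * B).trace ≤ (Qᵀ * B).trace := by
  rw [← hQR, ← Matrix.mul_assoc, ← Matrix.mul_assoc, hQ, one_mul]
  exact trace_mul_le_trace (transpose_mul_transpose_mul_self hQ' hQ) hR

lemma mul_eq_of_trace_transpose_mul_eq {Q Q' : Matrix m m ℝ} (hR : R.PosSemidef)
    (hQ : Qᵀ * Q = 1) (hQR : Q * R = B) (hQ' : Q'ᵀ * Q' = 1)
    (h : (Q'ᵀ * B).trace = (Qᵀ * B).trace) : Q' * R = B := by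
  rw [← hQR, ← Matrix.mul_assoc, ← Matrix.mul_assoc, hQ, one_mul] at h
  have hR' := mul_eq_self_of_trace_mul_eq (transpose_mul_transpose_mul_self hQ' hQ) hR h
  calc Q' * R = Q' * (Q'ᵀ * Q * R) := by rw [hR']
    _ = B := by rw [← Matrix.mul_assoc, ← Matrix.mul_assoc, mul_eq_one_comm.mp hQ', one_mul, hQR]

end Real

end Matrix

/-- Uniqueness part of the paper's Proposition 1 (case `det B ≥ 0`): if the
kernel of `B` has dimension at most 1, then there is exactly one maximizer of
`Q ↦ trace(Qᵀ B)` over `SO(n)`; equivalently, there is a unique `Q ∈ SO(n)`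
with `Q R = B`, where `R` is the positive semidefinite square root of `Bᵀ B`. -/
theorem stmt8 {n : ℕ} (B R : Matrix (Fin n) (Fin n) ℝ) (hdet : 0 ≤ B.det)
    (hR : R.PosSemidef) (hRR : R * R = Bᵀ * B)
    (hker : Module.finrank ℝ (LinearMap.ker B.mulVecLin) ≤ 1) :
    (∃! Q : Matrix (Fin n) (Fin n) ℝ, (Qᵀ * Q = 1 ∧ Q.det = 1) ∧
        ∀ Q' : Matrix (Fin n) (Fin n) ℝ, Q'ᵀ * Q' = 1 → Q'.det = 1 →
          (Q'ᵀ * B).trace ≤ (Qᵀ * B).trace)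
    ∧ (∃! Q : Matrix (Fin n) (Fin n) ℝ, (Qᵀ * Q = 1 ∧ Q.det = 1) ∧ Q * R = B) := by
  rw [← ker_mulVecLin_eq_of_mul_self_eq hR.transpose_eq hRR] at hker
  obtain ⟨Q, hQ, hQR⟩ := exists_specialOrthogonal_mul_eq hdet hR hRR hker
  have huniq : ∀ Q', (Q'ᵀ * Q' = 1 ∧ Q'.det = 1) → Q' * R = B → Q' = Q := fun Q' hQ' hQ'R =>
    eq_of_mul_eq_mul hR hker hQ'.1 hQ'.2 hQ.1 hQ.2 (hQ'R.trans hQR.symm)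
  refine ⟨⟨Q, ⟨hQ, fun Q' hQ' _ => trace_transpose_mul_le hR hQ.1 hQR hQ'⟩, ?_⟩,
    ⟨Q, ⟨hQ, hQR⟩, fun Q' ⟨hQ', hQ'R⟩ => huniq Q' hQ' hQ'R⟩⟩
  rintro Q' ⟨hQ', hmax⟩
  refine huniq Q' hQ' (mul_eq_of_trace_transpose_mul_eq hR hQ.1 hQR hQ'.1 ?_)
  exact (trace_transpose_mul_le hR hQ.1 hQR hQ'.1).antisymm (hmax Q hQ.1 hQ.2)
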